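/- arXiv:1810.04813 — 3 statements merged into one kernel-verified Lean document; each statement's English description precedes it below -/
import Mathlib

section
/- For nonnegative integers m and any b, c in a commutative ring where the relevant Pochhammer values are invertible, Gauss's summation specializes to: ∑_{n=0}^{m} ((-m)_n (b)_n)/((c)_n n!) = (c-b)_m / (c)_m, where (a)_n = a(a+1)⋯(a+n-1) is the rising factorial. -/
/-!
Clearing the denominator `(c)_m = (c)_n (c + n)_{m-n}` and using `(-m)_n = (-1)^n n! C(m, n)`
turns the identity into `∑ (-1)^n C(m, n) (b)_n (c + n)_{m-n} = (c - b)_m`. Writing `x^{\underline k}`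
for the falling factorial, `(-1)^n (b)_n = (-b)^{\underline n}` and `(x)_k = (x + k - 1)^{\underline k}`
make this the binomial theorem for falling factorials,
`(x + y)^{\underline m} = ∑ C(m, n) x^{\underline n} y^{\underline{m-n}}`, at `x = -b`, `y = c + m - 1`.
-/

open Polynomial Finset

namespace Polynomial

variable {R : Type*}

theorem descPochhammer_eval_eq_smeval [Ring R] (r : R) (n : ℕ) :
    (descPochhammer R n).eval r = (descPochhammer ℤ n).smeval r := by
  rw [descPochhammer_eval_eq_ascPochhammer, descPochhammer_smeval_eq_ascPochhammer,
    ascPochhammer_smeval_eq_eval]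

theorem descPochhammer_eval_add [Ring R] {x y : R} (h : Commute x y) (m : ℕ) :
    (descPochhammer R m).eval (x + y) = ∑ ij ∈ antidiagonal m,
      m.choose ij.1 * ((descPochhammer R ij.1).eval x * (descPochhammer R ij.2).eval y) := by
  simp only [descPochhammer_eval_eq_smeval]
  exact Ring.descPochhammer_smeval_add m h

theorem ascPochhammer_eval_mul_eval_add [CommSemiring R] (c : R) (n k : ℕ) :
    (ascPochhammer R n).eval c * (ascPochhammer R k).eval (c + n) =
      (ascPochhammer R (n + k)).eval c := by
  simpa using congrArg (eval c) (ascPochhammer_mul R n k)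

theorem ascPochhammer_eval_neg_natCast [Ring R] (m n : ℕ) :
    (ascPochhammer R n).eval (-(m : R)) = (-1) ^ n * (n.factorial * m.choose n) := by
  rw [ascPochhammer_eval_neg_eq_descPochhammer, descPochhammer_eval_eq_descFactorial,
    Nat.descFactorial_eq_factorial_mul_choose, Nat.cast_mul]

theorem sum_choose_mul_ascPochhammer_eval [CommRing R] (m : ℕ) (b c : R) :
    ∑ n ∈ range (m + 1), (-1) ^ n * m.choose n *
      ((ascPochhammer R n).eval b * (ascPochhammer R (m - n)).eval (c + n)) =
      (ascPochhammer R m).eval (c - b) := by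
  have hfalling : (ascPochhammer R m).eval (c - b) =
      (descPochhammer R m).eval (-b + (c + m - 1)) := by
    rw [descPochhammer_eval_eq_ascPochhammer]
    ring_nf
  rw [hfalling, descPochhammer_eval_add (Commute.all _ _), Nat.sum_antidiagonal_eq_sum_range_succ
    (fun i j => (m.choose i : R) *
      ((descPochhammer R i).eval (-b) * (descPochhammer R j).eval (c + m - 1)))]
  refine sum_congr rfl fun n hn => ?_
  have hnm : n ≤ m := Nat.lt_succ_iff.mp (mem_range.mp hn)
  have hshift : c + (m : R) - 1 - ((m - n : ℕ) : R) + 1 = c + n := by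
    rw [Nat.cast_sub hnm]
    ring
  have hsign : ((-1 : R) ^ n) * (-1) ^ n = 1 := by
    rw [← mul_pow]
    norm_num
  rw [← neg_neg b, ascPochhammer_eval_neg_eq_descPochhammer, neg_neg,
    descPochhammer_eval_eq_ascPochhammer _ (c + (m : R) - 1), hshift]
  linear_combination (m.choose n * ((descPochhammer R n).eval (-b) *
    (ascPochhammer R (m - n)).eval (c + n))) * hsign

end Polynomial

/-- Chu–Vandermonde / terminating Gauss summation: for `b c` in a field where the
relevant Pochhammer values and factorials are invertible,
`∑_{n=0}^{m} (-m)_n (b)_n / ((c)_n n!) = (c - b)_m / (c)_m`. -/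
theorem stmt_2 {F : Type*} [Field F] (m : ℕ) (b c : F)
    (hc : ∀ n ≤ m, (ascPochhammer F n).eval c ≠ 0)
    (hfac : ∀ n ≤ m, (n.factorial : F) ≠ 0) :
    ∑ n ∈ Finset.range (m + 1),
      (ascPochhammer F n).eval (-(m : F)) * (ascPochhammer F n).eval b /
        ((ascPochhammer F n).eval c * (n.factorial : F)) =
      (ascPochhammer F m).eval (c - b) / (ascPochhammer F m).eval c := by
  rw [← sum_choose_mul_ascPochhammer_eval, sum_div]
  refine sum_congr rfl fun n hn => ?_
  have hnm : n ≤ m := Nat.lt_succ_iff.mp (mem_range.mp hn)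
  have hsplit := ascPochhammer_eval_mul_eval_add c n (m - n)
  rw [Nat.add_sub_cancel' hnm] at hsplit
  rw [div_eq_div_iff (mul_ne_zero (hc n hnm) (hfac n hnm)) (hc m le_rfl),
    ascPochhammer_eval_neg_natCast, ← hsplit]
  ring
end

section
/- For every prime p and positive integers k_1, ..., k_r, the reversal identity holds: ∑_{p > m_1 > ⋯ > m_r > 0} 1/(m_1^{k_1} ⋯ m_r^{k_r}) ≡ (-1)^{k_1+⋯+k_r} ∑_{p > m_1 > ⋯ > m_r > 0} 1/(m_1^{k_r} ⋯ m_r^{k_1}) (mod p). -/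
/-!
Reflecting every index, `m ↦ p - m`, turns a chain `p > m₁ > ⋯ > m_r > 0` into the increasing
chain `0 < p - m₁ < ⋯ < p - m_r < p`, and read from its largest element this is a decreasing
chain carrying the exponents in reversed order. Since `(p - m)⁻¹ = -m⁻¹` in `ℤ/pℤ`, each
factor `m⁻ᵏ` only picks up a sign `(-1)ᵏ`.
-/

/-- Auxiliary strict truncated multiple harmonic sum: `HAux p N [k₁,…,k_r]` is
`∑_{N > m₁ > ⋯ > m_r > 0} ∏ᵢ mᵢ^{-kᵢ}` in `ℤ/pℤ`. -/
def HAux (p : ℕ) : ℕ → List ℕ → ZMod p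
  | _, [] => 1
  | N, k :: ks => ∑ m ∈ Finset.Ioo 0 N, ((m : ZMod p))⁻¹ ^ k * HAux p m ks

/-- The strict truncated multiple harmonic sum
`H_p(k₁,…,k_r) = ∑_{p > m₁ > ⋯ > m_r > 0} ∏ᵢ mᵢ^{-kᵢ}` in `ℤ/pℤ`. -/
def Hp (p : ℕ) (ks : List ℕ) : ZMod p := HAux p p ks

open Finset

section ChainSum

variable {R : Type*} [CommSemiring R]

/-- `descChainSum w a N [k₁,…,k_r] = ∑_{N > m₁ > ⋯ > m_r > a} ∏ᵢ w kᵢ mᵢ`. -/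
def descChainSum (w : ℕ → ℕ → R) (a : ℕ) : ℕ → List ℕ → R
  | _, [] => 1
  | N, k :: ks => ∑ m ∈ Ioo a N, w k m * descChainSum w a m ks

/-- `ascChainSum w P a [k₁,…,k_r] = ∑_{a < m₁ < ⋯ < m_r < P} ∏ᵢ w kᵢ mᵢ`. -/
def ascChainSum (w : ℕ → ℕ → R) (P : ℕ) : ℕ → List ℕ → R
  | _, [] => 1
  | a, k :: ks => ∑ m ∈ Ioo a P, w k m * ascChainSum w P m ks

theorem descChainSum_append_singleton (w : ℕ → ℕ → R) (k : ℕ) (ks : List ℕ) (a N : ℕ) :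
    descChainSum w a N (ks ++ [k]) = ∑ m ∈ Ioo a N, w k m * descChainSum w m N ks := by
  induction ks generalizing N with
  | nil => simp [descChainSum]
  | cons k' ks ih =>
    calc descChainSum w a N (k' :: ks ++ [k])
        = ∑ i ∈ Ioo a N, ∑ m ∈ Ioo a i, w k m * (w k' i * descChainSum w m i ks) := by
          simp only [List.cons_append, descChainSum, ih, mul_sum]
          exact sum_congr rfl fun i _ => sum_congr rfl fun m _ => mul_left_comm _ _ _
      _ = ∑ m ∈ Ioo a N, ∑ i ∈ Ioo m N, w k m * (w k' i * descChainSum w m i ks) :=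
          sum_comm' fun i m => by simp only [mem_Ioo]; omega
      _ = ∑ m ∈ Ioo a N, w k m * descChainSum w m N (k' :: ks) := by
          simp only [descChainSum, mul_sum]

theorem ascChainSum_eq_descChainSum_reverse (w : ℕ → ℕ → R) (P : ℕ) (ks : List ℕ) (a : ℕ) :
    ascChainSum w P a ks = descChainSum w a P ks.reverse := by
  induction ks generalizing a with
  | nil => rfl
  | cons k ks ih => simp only [ascChainSum, List.reverse_cons, descChainSum_append_singleton, ih]

theorem descChainSum_pow_mul (w : ℕ → ℕ → R) (c : R) (a : ℕ) (ks : List ℕ) (N : ℕ) :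
    descChainSum (fun k m => c ^ k * w k m) a N ks = c ^ ks.sum * descChainSum w a N ks := by
  induction ks generalizing N with
  | nil => simp [descChainSum]
  | cons k ks ih =>
    simp only [descChainSum, ih, List.sum_cons, pow_add, mul_sum]
    exact sum_congr rfl fun m _ => by ring

theorem descChainSum_eq_ascChainSum_of_reflect {w w' : ℕ → ℕ → R} {P : ℕ}
    (hw : ∀ k m, m ≤ P → w' k (P - m) = w k m) (a : ℕ) (ks : List ℕ) {N : ℕ} (hN : N ≤ P) :
    descChainSum w a N ks = ascChainSum w' (P - a) (P - N) ks := by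
  induction ks generalizing N with
  | nil => rfl
  | cons k ks ih =>
    refine sum_nbij' (P - ·) (P - ·) ?_ ?_ ?_ ?_ ?_ <;> intro m hm <;> simp only [mem_Ioo] at hm
    · simp only [mem_Ioo]; omega
    · simp only [mem_Ioo]; omega
    · omega
    · omega
    · rw [hw k m (by omega), ih (by omega)]

end ChainSum

theorem HAux_eq_descChainSum (p N : ℕ) (ks : List ℕ) :
    HAux p N ks = descChainSum (fun k m => ((m : ZMod p))⁻¹ ^ k) 0 N ks := by
  induction ks generalizing N with
  | nil => rfl
  | cons k ks ih => simp only [HAux, descChainSum, ih]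

theorem ZMod.neg_one_pow_mul_inv_natCast_sub_pow {p : ℕ} [Fact p.Prime] {m : ℕ} (hm : m ≤ p)
    (k : ℕ) : (-1) ^ k * ((p - m : ℕ) : ZMod p)⁻¹ ^ k = ((m : ZMod p))⁻¹ ^ k := by
  rw [Nat.cast_sub hm, ZMod.natCast_self, zero_sub, inv_neg, ← mul_pow,
    neg_one_mul, neg_neg]

theorem stmt_3_general (p : ℕ) (hp : p.Prime) (ks : List ℕ) :
    Hp p ks = (-1 : ZMod p) ^ (ks.sum) * Hp p ks.reverse := by
  have : Fact p.Prime := ⟨hp⟩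
  rw [Hp, Hp, HAux_eq_descChainSum, HAux_eq_descChainSum,
    descChainSum_eq_ascChainSum_of_reflect (w' := fun k m => (-1) ^ k * ((m : ZMod p))⁻¹ ^ k)
      (fun k m hm => ZMod.neg_one_pow_mul_inv_natCast_sub_pow hm k) 0 ks le_rfl,
    ascChainSum_eq_descChainSum_reverse, Nat.sub_zero, Nat.sub_self, descChainSum_pow_mul,
    List.sum_reverse]

/-- Reversal identity: `H_p(k₁,…,k_r) ≡ (-1)^{k₁+⋯+k_r} H_p(k_r,…,k₁) (mod p)`. -/
theorem stmt_3 (p : ℕ) (hp : p.Prime) (ks : List ℕ) (hks : ∀ k ∈ ks, 0 < k) :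
    Hp p ks = (-1 : ZMod p) ^ (ks.sum) * Hp p ks.reverse :=
  stmt_3_general p hp ks
end

section
/- For any prime p and any weight-k, height-s datum, the sum ∑_{k'+k''=k, s'+s''=s, k',k''≥1, s',s''≥0} (∑_{𝐤'∈I_0(k',s')} (-1)^{dep(𝐤')} H_p(reverse(𝐤'))) · (∑_{𝐤''∈I(k'',s'')} H_p^⋆(𝐤'')), where I(k'',s'') is the set of all indices of weight k'' and height s'' (no restriction on the first component), vanishes in 𝒜 (i.e., mod p for all large p), given that ∑_{n=1}^{p-1} n^{-m} ≡ 0 mod p for (p-1) ∤ m. -/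
/-- Auxiliary non-strict truncated multiple harmonic sum. -/
def HstarAux (p : ℕ) : ℕ → List ℕ → ZMod p
  | _, [] => 1
  | N, k :: ks => ∑ m ∈ Finset.Ioo 0 N, ((m : ZMod p))⁻¹ ^ k * HstarAux p (m + 1) ks

/-- `H_p^⋆(k₁,…,k_r) = ∑_{p > m₁ ≥ ⋯ ≥ m_r > 0} ∏ᵢ mᵢ^{-kᵢ}` in `ℤ/pℤ`. -/
def Hps (p : ℕ) (ks : List ℕ) : ZMod p := HstarAux p p ks

/-- `I₀(k,s)`: compositions of `k` with first component `> 1` and height `s`. -/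
def Izero (k s : ℕ) : Finset (Composition k) :=
  Finset.univ.filter fun c =>
    2 ≤ c.blocks.headI ∧ (c.blocks.filter fun x => 2 ≤ x).length = s

/-- `I(k,s)`: all compositions of `k` of height `s` (no condition on the first
component). -/
def Iall (k s : ℕ) : Finset (Composition k) :=
  Finset.univ.filter fun c => (c.blocks.filter fun x => 2 ≤ x).length = s

open Finset
open scoped Nat

lemma Finset.sum_list_map_comm {ι β M : Type*} [AddCommMonoid M] (s : Finset ι) (l : List β)
    (F : ι → β → M) :
    ∑ x ∈ s, (l.map (F x)).sum = (l.map fun b => ∑ x ∈ s, F x b).sum := by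
  induction l with
  | nil => simp
  | cons b t ih => simp [sum_add_distrib, ih]

lemma List.sum_map_flatMap {α β M : Type*} [AddCommMonoid M] (l : List α) (g : α → List β)
    (f : β → M) : ((l.flatMap g).map f).sum = (l.map fun a => ((g a).map f).sum).sum := by
  simp [List.flatMap_def, List.sum_flatten, Function.comp_def]

lemma sum_Ioo_sum_Ioo_add_sum_diag {M : Type*} [AddCommMonoid M] (N : ℕ) (f : ℕ → ℕ → M) :
    ∑ n ∈ Ioo 0 N, ∑ m ∈ Ioo 0 N, f n m + ∑ n ∈ Ioo 0 N, f n n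
      = ∑ n ∈ Ioo 0 N, ∑ m ∈ Ioo 0 (n + 1), f n m
        + ∑ m ∈ Ioo 0 N, ∑ n ∈ Ioo 0 (m + 1), f n m := by
  have hrow : ∀ n ∈ Ioo 0 N, ∑ m ∈ Ioo 0 N, f n m + f n n
      = ∑ m ∈ Ioo 0 (n + 1), f n m + ∑ m ∈ Ico n N, f n m := by
    intro n hn
    rw [mem_Ioo] at hn
    rw [← sum_union_inter]
    have hunion : Ioo 0 (n + 1) ∪ Ico n N = Ioo 0 N := by
      ext; simp only [mem_union, mem_Ioo, mem_Ico]; omega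
    have hinter : Ioo 0 (n + 1) ∩ Ico n N = {n} := by
      ext; simp only [mem_inter, mem_Ioo, mem_Ico, mem_singleton]; omega
    rw [hunion, hinter, sum_singleton]
  rw [← sum_add_distrib, sum_congr rfl hrow, sum_add_distrib]
  congr 1
  exact sum_comm' fun n m => by simp only [mem_Ioo, mem_Ico]; omega

/-- `invPowSum p p m` is the paper's `H_p(m)`. -/
def invPowSum (p N m : ℕ) : ZMod p := ∑ n ∈ Ioo 0 N, ((n : ZMod p))⁻¹ ^ m

def bumps (a : ℕ) : List ℕ → List (List ℕ)
  | [] => []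
  | k :: ks => ((k + a) :: ks) :: (bumps a ks).map (k :: ·)

/-- Inserting `n` at each of the places of the non-strict chain `m₁ ≥ ⋯ ≥ m_r` counts every
tie `n = mᵢ` twice; the ties are the terms of `bumps`. -/
theorem invPowSum_mul_HstarAux_add (p a N : ℕ) (l : List ℕ) :
    invPowSum p N a * HstarAux p N l + ((bumps a l).map (HstarAux p N)).sum
      = ((List.permutations'Aux a l).map (HstarAux p N)).sum := by
  induction l generalizing N with
  | nil => simp [invPowSum, bumps, List.permutations'Aux, HstarAux]
  | cons k ks ih =>
    set f : ℕ → ℕ → ZMod p := fun n m => ((n : ZMod p))⁻¹ ^ a *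
      (((m : ZMod p))⁻¹ ^ k * HstarAux p (m + 1) ks)
    have hprod : invPowSum p N a * HstarAux p N (k :: ks) = ∑ n ∈ Ioo 0 N, ∑ m ∈ Ioo 0 N, f n m :=
      sum_mul_sum _ _ _ _
    have hmerge : HstarAux p N ((k + a) :: ks) = ∑ n ∈ Ioo 0 N, f n n :=
      sum_congr rfl fun n _ => by simp only [f, pow_add]; ring
    have hfirst : HstarAux p N (a :: k :: ks) = ∑ n ∈ Ioo 0 N, ∑ m ∈ Ioo 0 (n + 1), f n m :=
      sum_congr rfl fun n _ => mul_sum _ _ _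
    have hrest : ∑ m ∈ Ioo 0 N, ∑ n ∈ Ioo 0 (m + 1), f n m
          + ((bumps a ks).map fun u => HstarAux p N (k :: u)).sum
        = ((List.permutations'Aux a ks).map fun τ => HstarAux p N (k :: τ)).sum := by
      simp only [HstarAux, ← Finset.sum_list_map_comm, ← sum_add_distrib]
      refine sum_congr rfl fun m _ => ?_
      rw [List.sum_map_mul_left, List.sum_map_mul_left, ← ih, invPowSum, sum_mul, mul_add, mul_sum]
      congr 1
      exact sum_congr rfl fun n _ => by ring
    simp only [bumps, List.permutations'Aux, List.map_cons, List.sum_cons, List.map_map,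
      Function.comp_def]
    rw [hprod, hmerge, hfirst, ← hrest, ← add_assoc, sum_Ioo_sum_Ioo_add_sum_diag, add_assoc]

section bumps

variable {M : Type*} [AddCommMonoid M]

lemma sum_permutations'Aux_sum_bumps (a x : ℕ) (l : List ℕ) (f : List ℕ → M) :
    ((List.permutations'Aux x l).map fun τ => ((bumps a τ).map f).sum).sum
      = ((List.permutations'Aux (x + a) l).map f).sum
        + ((bumps a l).map fun u => ((List.permutations'Aux x u).map f).sum).sum := by
  induction l generalizing f with
  | nil => simp [List.permutations'Aux, bumps]
  | cons y ys ih =>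
    simp only [List.permutations'Aux, bumps, List.map_cons, List.sum_cons, List.map_map,
      Function.comp_def]
    rw [List.sum_map_add, ih (fun u => f (y :: u)), List.sum_map_add]
    abel

lemma sum_permutations'_sum_bumps (a : ℕ) (l : List ℕ) (f : List ℕ → M) :
    ((l.permutations').map fun τ => ((bumps a τ).map f).sum).sum
      = ((bumps a l).map fun u => ((u.permutations').map f).sum).sum := by
  induction l generalizing f with
  | nil => simp [bumps]
  | cons x xs ih =>
    simp only [List.permutations', List.sum_map_flatMap, sum_permutations'Aux_sum_bumps, List.sum_map_add,
      ih, bumps, List.map_cons, List.sum_cons, List.map_map, Function.comp_def]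

lemma sum_of_mem_bumps {a : ℕ} {l u : List ℕ} (hu : u ∈ bumps a l) : u.sum = a + l.sum := by
  induction l generalizing u with
  | nil => simp [bumps] at hu
  | cons k ks ih =>
    simp only [bumps, List.mem_cons, List.mem_map] at hu
    rcases hu with rfl | ⟨v, hv, rfl⟩
    · simp only [List.sum_cons]; ring
    · simp only [List.sum_cons, ih hv]; ring

lemma length_of_mem_bumps {a : ℕ} {l u : List ℕ} (hu : u ∈ bumps a l) : u.length = l.length := by
  induction l generalizing u with
  | nil => simp [bumps] at hu
  | cons k ks ih =>
    simp only [bumps, List.mem_cons, List.mem_map] at hu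
    rcases hu with rfl | ⟨v, hv, rfl⟩
    · rfl
    · simp [ih hv]

lemma pos_of_mem_bumps {a : ℕ} {l u : List ℕ} (hu : u ∈ bumps a l) (hl : ∀ x ∈ l, 0 < x) :
    ∀ x ∈ u, 0 < x := by
  induction l generalizing u with
  | nil => simp [bumps] at hu
  | cons k ks ih =>
    simp only [bumps, List.mem_cons, List.mem_map] at hu
    simp only [List.mem_cons, forall_eq_or_imp] at hl
    rcases hu with rfl | ⟨v, hv, rfl⟩ <;> simp only [List.mem_cons, forall_eq_or_imp]
    · exact ⟨by omega, hl.2⟩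
    · exact ⟨hl.1, ih hv hl.2⟩

end bumps

theorem sum_permutations'_Hps_eq_zero {p : ℕ} {l : List ℕ} (hne : l ≠ []) (hpos : ∀ x ∈ l, 0 < x)
    (hpow : ∀ m, 0 < m → m ≤ l.sum → invPowSum p p m = 0) :
    ((l.permutations').map (Hps p)).sum = 0 := by
  induction hlen : l.length generalizing l with
  | zero => exact absurd (List.eq_nil_of_length_eq_zero hlen) hne
  | succ n ih =>
    obtain ⟨a, t, rfl⟩ := List.exists_cons_of_ne_nil hne
    simp only [List.mem_cons, forall_eq_or_imp] at hpos
    have ha : invPowSum p p a = 0 := hpow a hpos.1 (by simp)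
    have hstep : ∀ ρ : List ℕ, ((List.permutations'Aux a ρ).map (Hps p)).sum
        = ((bumps a ρ).map (Hps p)).sum := fun ρ => by
      have h := invPowSum_mul_HstarAux_add p a p ρ
      rw [ha, zero_mul, zero_add] at h
      exact h.symm
    rw [List.permutations', List.sum_map_flatMap]
    simp only [hstep, sum_permutations'_sum_bumps]
    refine List.sum_eq_zero fun x hx => ?_
    obtain ⟨u, hu, rfl⟩ := List.mem_map.1 hx
    have hulen : u.length = n := by rw [length_of_mem_bumps hu]; simpa using hlen
    have hune : u ≠ [] := by
      rintro rfl
      obtain rfl : t = [] := List.eq_nil_of_length_eq_zero (length_of_mem_bumps hu).symm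
      simp [bumps] at hu
    refine ih hune (pos_of_mem_bumps hu hpos.2) (fun m hm hmu => hpow m hm ?_) hulen
    rwa [sum_of_mem_bumps hu, ← List.sum_cons] at hmu

section symmetrization

variable {α M : Type*} [AddCommMonoid M]

open Equiv in
lemma sum_permutations'_ofFn {n : ℕ} (v : Fin n → α) (f : List α → M) :
    (((List.ofFn v).permutations').map f).sum = ∑ σ : Perm (Fin n), f (List.ofFn (v ∘ σ)) := by
  classical
  have hnodup : (List.finRange n).permutations'.Nodup :=
    (List.permutations_perm_permutations' _).nodup_iff.1
      (List.nodup_permutations _ (List.nodup_finRange n))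
  have hinj : Function.Injective fun σ : Perm (Fin n) => List.ofFn σ :=
    List.ofFn_injective.comp DFunLike.coe_injective
  have himage : univ.image (fun σ : Perm (Fin n) => List.ofFn σ)
      = (List.finRange n).permutations'.toFinset := by
    refine eq_of_subset_of_card_le (fun ρ hρ => ?_) ?_
    · obtain ⟨σ, -, rfl⟩ := mem_image.1 hρ
      simpa [List.mem_permutations', List.ofFn_id] using σ.ofFn_comp_perm id
    · rw [List.toFinset_card_of_nodup hnodup, card_image_of_injective _ hinj, card_univ,
        Fintype.card_perm, Fintype.card_fin,
        ← (List.permutations_perm_permutations' _).length_eq, List.length_permutations,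
        List.length_finRange]
  rw [List.ofFn_eq_map, ← List.map_permutations', List.map_map, ← List.sum_toFinset _ hnodup,
    ← himage, sum_image fun σ _ τ _ h => hinj h]
  simp [List.map_ofFn]

theorem sum_sum_permutations'_eq_factorial_smul {n : ℕ} (S : Finset (List α))
    (hlen : ∀ l ∈ S, l.length = n) (hS : ∀ l ∈ S, ∀ l', l'.Perm l → l' ∈ S) (f : List α → M) :
    ∑ l ∈ S, ((l.permutations').map f).sum = n ! • ∑ l ∈ S, f l := by
  have hrange : ∀ l ∈ S, l ∈ Set.range (List.ofFn : (Fin n → α) → List α) := fun l hl =>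
    ⟨fun i => l[(i : ℕ)]'(by rw [hlen l hl]; exact i.2),
      List.ext_getElem (by simp [hlen l hl]) fun _ _ _ => by simp⟩
  set T := S.preimage List.ofFn List.ofFn_injective.injOn
  have hT : ∀ g : List α → M, ∑ v ∈ T, g (List.ofFn v) = ∑ l ∈ S, g l := fun g =>
    sum_preimage _ _ _ _ fun l hl hl' => absurd (hrange l hl) hl'
  have hperm : ∀ σ : Equiv.Perm (Fin n),
      ∑ v ∈ T, f (List.ofFn (v ∘ σ)) = ∑ v ∈ T, f (List.ofFn v) := fun σ =>
    sum_nbij' (· ∘ σ) (· ∘ ⇑σ⁻¹)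
      (fun v hv => by
        simp only [T, mem_preimage] at hv ⊢
        exact hS _ hv _ (σ.ofFn_comp_perm v))
      (fun v hv => by
        simp only [T, mem_preimage] at hv ⊢
        exact hS _ hv _ (Equiv.Perm.ofFn_comp_perm σ⁻¹ v))
      (fun v _ => by ext; simp) (fun v _ => by ext; simp) fun _ _ => rfl
  rw [← hT, ← hT]
  simp only [sum_permutations'_ofFn]
  rw [sum_comm, sum_congr rfl fun σ _ => hperm σ, sum_const, card_univ, Fintype.card_perm,
    Fintype.card_fin]

end symmetrization

lemma exists_mem_Iall_blocks_eq_of_perm {k s : ℕ} {c : Composition k} (hc : c ∈ Iall k s)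
    {l : List ℕ} (hl : l.Perm c.blocks) : ∃ c' ∈ Iall k s, c'.blocks = l := by
  refine ⟨⟨l, fun hi => c.blocks_pos (hl.subset hi), hl.sum_eq.trans c.blocks_sum⟩, ?_, rfl⟩
  simp only [Iall, mem_filter, mem_univ, true_and] at hc ⊢
  exact (hl.filter _).length_eq.trans hc

theorem sum_Iall_Hps_eq_zero {p k : ℕ} [Fact p.Prime] (hk : 0 < k) (hkp : k < p)
    (hpow : ∀ m, 0 < m → m ≤ k → invPowSum p p m = 0) (s : ℕ) :
    ∑ c ∈ Iall k s, Hps p c.blocks = 0 := by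
  let blocks : Composition k ↪ List ℕ := ⟨Composition.blocks, fun _ _ => Composition.ext⟩
  set S := (Iall k s).map blocks
  have hS : ∀ l ∈ S, ∃ c ∈ Iall k s, c.blocks = l := fun _ => mem_map.1
  rw [show ∑ c ∈ Iall k s, Hps p c.blocks = ∑ l ∈ S, Hps p l from (sum_map _ blocks _).symm,
    ← sum_fiberwise_of_maps_to (g := List.length) (t := range (k + 1)) fun l hl => by
      obtain ⟨c, -, rfl⟩ := hS l hl
      exact mem_range.2 (Nat.lt_succ_of_le c.length_le)]
  refine sum_eq_zero fun n hn => ?_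
  have hfac : (n ! : ZMod p) ≠ 0 := by
    rw [Ne, ZMod.natCast_eq_zero_iff, (Fact.out : p.Prime).dvd_factorial, not_le]
    rw [mem_range] at hn
    omega
  have hsym := sum_sum_permutations'_eq_factorial_smul (S.filter (·.length = n))
    (fun l hl => (mem_filter.1 hl).2)
    (fun l hl l' hl' => by
      obtain ⟨hlS, rfl⟩ := mem_filter.1 hl
      obtain ⟨c, hc, rfl⟩ := hS l hlS
      obtain ⟨c', hc', rfl⟩ := exists_mem_Iall_blocks_eq_of_perm hc hl'
      exact mem_filter.2 ⟨mem_map_of_mem blocks hc', hl'.length_eq⟩)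
    (Hps p)
  rw [sum_eq_zero fun l hl => ?_, nsmul_eq_mul] at hsym
  · exact (mul_eq_zero.1 hsym.symm).resolve_left hfac
  obtain ⟨c, -, rfl⟩ := hS l (mem_filter.1 hl).1
  refine sum_permutations'_Hps_eq_zero (fun h => ?_) (fun x hx => c.blocks_pos hx)
    fun m hm hmk => hpow m hm (c.blocks_sum ▸ hmk)
  have := c.blocks_sum
  rw [h, List.sum_nil] at this
  omega

theorem stmt_15_general (k s : ℕ)
    (hpow : ∀ p : ℕ, p.Prime → ∀ m : ℕ, 0 < m → ¬ (p - 1) ∣ m →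
      ∑ n ∈ Finset.Icc 1 (p - 1), ((n : ZMod p))⁻¹ ^ m = 0) :
    ∃ N : ℕ, ∀ p : ℕ, N ≤ p → p.Prime →
      ∑ k' ∈ Finset.Icc 1 (k - 1), ∑ s' ∈ Finset.range (s + 1),
        (∑ c ∈ Izero k' s', (-1 : ZMod p) ^ c.length * Hp p c.blocks.reverse) *
          (∑ c ∈ Iall (k - k') (s - s'), Hps p c.blocks) = 0 := by
  refine ⟨k + 2, fun p hkp hp => ?_⟩
  have : Fact p.Prime := ⟨hp⟩
  refine sum_eq_zero fun k' hk' => sum_eq_zero fun s' _ => ?_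
  rw [mem_Icc] at hk'
  rw [sum_Iall_Hps_eq_zero (by omega) (by omega) (fun m hm hmk => ?_), mul_zero]
  have hIoo : Ioo 0 p = Icc 1 (p - 1) := by ext; simp only [mem_Ioo, mem_Icc]; omega
  rw [invPowSum, hIoo]
  exact hpow p hp m hm fun hdvd => by have := Nat.le_of_dvd hm hdvd; omega

/-- The middle terms in the proof of the star/non-star lemma vanish: given the
vanishing of the power sums `∑_{n=1}^{p-1} n^{-m}` for `(p-1) ∤ m`, the sum
`∑_{k'+k''=k, s'+s''=s} (∑_{𝐤'∈I₀(k',s')} (-1)^{dep 𝐤'} H_p(reverse 𝐤')) ·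
(∑_{𝐤''∈I(k'',s'')} H_p^⋆(𝐤''))` vanishes mod `p` for all large primes `p`. -/
theorem stmt_15 (k s : ℕ) (hk : 2 ≤ k) (hs : 1 ≤ s) (hks : 2 * s ≤ k)
    (hpow : ∀ p : ℕ, p.Prime → ∀ m : ℕ, 0 < m → ¬ (p - 1) ∣ m →
      ∑ n ∈ Finset.Icc 1 (p - 1), ((n : ZMod p))⁻¹ ^ m = 0) :
    ∃ N : ℕ, ∀ p : ℕ, N ≤ p → p.Prime →
      ∑ k' ∈ Finset.Icc 1 (k - 1), ∑ s' ∈ Finset.range (s + 1),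
        (∑ c ∈ Izero k' s', (-1 : ZMod p) ^ c.length * Hp p c.blocks.reverse) *
          (∑ c ∈ Iall (k - k') (s - s'), Hps p c.blocks) = 0 :=
  stmt_15_general k s hpow
end
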